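/- Let K be a field of characteristic zero and n = 5. There exists no family (O(Λ))_{Λ ∈ 𝒟₅} of pairwise disjoint subsets of K⁵ whose union is K⁵ such that for every dipartition Θ ∈ 𝒟₅ one has V_Θ^D = ⋃_{Λ ∈ 𝒟₅, Λ ⋬_D Θ} O(Λ). -/

import Mathlib

open MvPolynomial

/-- `l` is (the list of parts of) a partition: weakly decreasing positive entries. -/
def IsPtn (l : List ℕ) : Prop := l.Pairwise (· ≥ ·) ∧ ∀ x ∈ l, 0 < x

/-- `(i, c)` (row `i`, column `c`, both 0-indexed) is a cell of the Young diagram of `l`. -/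
def IsCell (l : List ℕ) (p : ℕ × ℕ) : Prop := p.2 < l.getD p.1 0

/-- Length of column `c` (0-indexed) of the Young diagram of `l`. -/
def colLen (l : List ℕ) (c : ℕ) : ℕ := l.countP fun x => decide (c < x)

/-- `(tT, tS)` is a bitableau of shape `(l, m)`: a filling of the two Young diagrams with
the integers `Fin n`, each occurring exactly once. -/
def IsBitableau (n : ℕ) (l m : List ℕ) (tT tS : ℕ × ℕ → Fin n) : Prop :=
  (∀ p q, IsCell l p → IsCell l q → tT p = tT q → p = q) ∧
  (∀ p q, IsCell m p → IsCell m q → tS p = tS q → p = q) ∧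
  (∀ p q, IsCell l p → IsCell m q → tT p ≠ tS q) ∧
  ∀ k : Fin n, (∃ p, IsCell l p ∧ tT p = k) ∨ (∃ p, IsCell m p ∧ tS p = k)

/-- The `S`-Specht polynomial of the tableau `t` of shape `l`, evaluated at the squared
variables: the product over all columns of the Vandermonde determinant of the squares of the
variables indexed by the column entries. -/
noncomputable def speSsq (K : Type*) [CommRing K] (n : ℕ) (l : List ℕ) (t : ℕ × ℕ → Fin n) :
    MvPolynomial (Fin n) K :=
  ∏ c ∈ Finset.range (l.getD 0 0), ∏ i ∈ Finset.range (colLen l c),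
    ∏ j ∈ Finset.range (colLen l c),
      if i < j then X (t (i, c)) ^ 2 - X (t (j, c)) ^ 2 else 1

/-- The product of the variables indexed by the entries of a tableau of shape `l`. -/
noncomputable def prodVars (K : Type*) [CommRing K] (n : ℕ) (l : List ℕ) (t : ℕ × ℕ → Fin n) :
    MvPolynomial (Fin n) K :=
  ∏ c ∈ Finset.range (l.getD 0 0), ∏ i ∈ Finset.range (colLen l c), X (t (i, c))

/-- The `B`-Specht polynomial of the bitableau `(tT, tS)` of shape `(l, m)`. -/
noncomputable def speB (K : Type*) [CommRing K] (n : ℕ) (l m : List ℕ)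
    (tT tS : ℕ × ℕ → Fin n) : MvPolynomial (Fin n) K :=
  speSsq K n l tT * speSsq K n m tS * prodVars K n m tS

/-- The `D`-Specht polynomial of a bitableau of shape `(l, l)`; sign `true` is `+`. -/
noncomputable def speD (K : Type*) [CommRing K] (n : ℕ) (sign : Bool) (l : List ℕ)
    (tT tS : ℕ × ℕ → Fin n) : MvPolynomial (Fin n) K :=
  if sign then speB K n l l tT tS + speB K n l l tS tT
  else speB K n l l tT tS - speB K n l l tS tT

/-- Dipartitions: an unordered pair of partitions, or a partition with a sign
(`true` is `+`, `false` is `−`). -/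
inductive Dipart : Type
  | pair (s : Multiset (List ℕ)) : Dipart
  | signed (l : List ℕ) (sign : Bool) : Dipart

/-- A dipartition of `n`: an unordered pair of distinct partitions whose sizes sum to `n`,
or a signed partition of `n/2` (for even `n`). -/
def Dipart.Valid (n : ℕ) : Dipart → Prop
  | .pair s => ∃ l m : List ℕ, s = {l, m} ∧ l ≠ m ∧ IsPtn l ∧ IsPtn m ∧ l.sum + m.sum = n
  | .signed l _ => IsPtn l ∧ 2 * l.sum = n

/-- The bidominance order on bipartitions: `bidom l m w t` means `(l,m) ⊴_B (w,t)`. -/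
def bidom (l m w t : List ℕ) : Prop :=
  ∀ j : ℕ, 1 ≤ j →
    ((l.take j).sum + (m.take j).sum ≤ (w.take j).sum + (t.take j).sum ∧
      l.getD (j - 1) 0 + ((l.take (j - 1)).sum + (m.take (j - 1)).sum)
        ≤ w.getD (j - 1) 0 + ((w.take (j - 1)).sum + (t.take (j - 1)).sum))

/-- `predD l m t w` means `{l,m} ≼_D {t,w}` for unordered pairs of partitions. -/
def predD (l m t w : List ℕ) : Prop :=
  (bidom l m t w ∨ bidom l m w t) ∧ (bidom m l t w ∨ bidom m l w t)

/-- The didominance relation `⊴_D` on dipartitions. -/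
def didom : Dipart → Dipart → Prop
  | .pair s, .pair s' => ∃ l m t w, s = {l, m} ∧ s' = {t, w} ∧ predD l m t w
  | .pair s, .signed l' _ => ∃ l m, s = {l, m} ∧ predD l m l' l'
  | .signed l' _, .pair s => ∃ t w, s = {t, w} ∧ predD l' l' t w
  | .signed l b, .signed m b' => (l = m ∧ b = b') ∨ (l ≠ m ∧ predD l l m m)

/-- The `B`-Specht ideal of shape `(l, m)`. -/
noncomputable def IdealB (K : Type*) [CommRing K] (n : ℕ) (l m : List ℕ) :
    Ideal (MvPolynomial (Fin n) K) :=
  Ideal.span {f | ∃ tT tS, IsBitableau n l m tT tS ∧ f = speB K n l m tT tS}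

/-- The `D`-Specht ideal of a dipartition.  For an unordered pair `{l,m}` it is generated by
all `B`-Specht polynomials of shapes `(l,m)` and `(m,l)`; for a signed partition it is
generated by the `D`-Specht polynomials. -/
noncomputable def IdealD (K : Type*) [CommRing K] (n : ℕ) :
    Dipart → Ideal (MvPolynomial (Fin n) K)
  | .pair s => Ideal.span
      {f | ∃ l m tT tS, s = {l, m} ∧ IsBitableau n l m tT tS ∧ f = speB K n l m tT tS}
  | .signed lam b => Ideal.span
      {f | ∃ tT tS, IsBitableau n lam lam tT tS ∧ f = speD K n b lam tT tS}

/-- The variety of the `B`-Specht ideal in `Kⁿ`. -/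
def varB (K : Type*) [CommRing K] (n : ℕ) (l m : List ℕ) : Set (Fin n → K) :=
  {x | ∀ f ∈ IdealB K n l m, MvPolynomial.eval x f = 0}

/-- The variety of the `D`-Specht ideal in `Kⁿ`. -/
def varD (K : Type*) [CommRing K] (n : ℕ) (d : Dipart) : Set (Fin n → K) :=
  {x | ∀ f ∈ IdealD K n d, MvPolynomial.eval x f = 0}

/-- The signed-permutation action on `K[X₁,…,Xₙ]`: `X i ↦ ε i · X (σ i)`. -/
noncomputable def dact (K : Type*) [CommRing K] (n : ℕ) (ε : Fin n → ℤˣ)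
    (σ : Equiv.Perm (Fin n)) : MvPolynomial (Fin n) K →ₐ[K] MvPolynomial (Fin n) K :=
  MvPolynomial.aeval fun i => ((ε i : ℤ) : MvPolynomial (Fin n) K) * X (σ i)

/-!
Evaluate at `x = (1,1,1,1,0)`. Since `x` lies in exactly one `O(Λ)`, `x ∈ V_Θ` iff `Λ ⋬_D Θ`.
Explicit `B`-Specht polynomials of shapes `((2,1),(2))` and `((1,1),(3))` do not vanish at `x`,
so `Λ ⊴_D {(2,1),(2)}` and `Λ ⊴_D {(3),(1,1)}`, and `x ∉ V_Λ` by reflexivity. On the other hand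
a `B`-Specht polynomial of shape `(λ,μ)` vanishes at `x` as soon as `μ` has two rows, or `λ` has
three rows or a `2 × 2` square: some column then holds two entries where `x` is `1`, or `μ`
holds the entry where `x` is `0`. Together with `λ₁, μ₁ ≤ 2` and `|λ| + |μ| = 5` this forces
`Λ = {(2,1),(2)}`, which is not didominated by `{(3),(1,1)}`.
-/

lemma Multiset.pair_eq_pair_iff {α : Type*} {a b c d : α} :
    ({a, b} : Multiset α) = {c, d} ↔ (a = c ∧ b = d) ∨ (a = d ∧ b = c) := by
  constructor
  · intro h
    simp only [Multiset.insert_eq_cons, Multiset.cons_eq_cons, Multiset.singleton_inj,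
      Multiset.singleton_eq_cons_iff] at h
    aesop
  · rintro (⟨rfl, rfl⟩ | ⟨rfl, rfl⟩)
    · rfl
    · exact Multiset.pair_comm _ _

lemma List.getD_antitone_of_pairwise_ge {l : List ℕ} (hl : l.Pairwise (· ≥ ·)) {i j : ℕ}
    (hij : i ≤ j) : l.getD j 0 ≤ l.getD i 0 := by
  rcases lt_or_ge j l.length with hj | hj
  · rw [List.getD_eq_getElem _ _ hj, List.getD_eq_getElem _ _ (by omega)]
    rcases hij.lt_or_eq with hij | rfl
    · exact List.pairwise_iff_getElem.mp hl i j (by omega) hj hij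
    · rfl
  · rw [List.getD_eq_default _ _ hj]
    exact Nat.zero_le _

namespace IsCell

variable {l : List ℕ}

lemma mono (hl : l.Pairwise (· ≥ ·)) {i c i' c' : ℕ} (h : IsCell l (i, c)) (hi : i' ≤ i)
    (hc : c' ≤ c) : IsCell l (i', c') :=
  lt_of_le_of_lt hc (lt_of_lt_of_le h (List.getD_antitone_of_pairwise_ge hl hi))

lemma lt_colLen (hl : l.Pairwise (· ≥ ·)) {i c : ℕ} (h : IsCell l (i, c)) : i < colLen l c := by
  induction l generalizing i with
  | nil => simp [IsCell] at h
  | cons a t ih =>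
    rw [List.pairwise_cons] at hl
    have ha : c < a := mono (List.pairwise_cons.mpr hl) h (Nat.zero_le i) le_rfl
    simp only [colLen, List.countP_cons, decide_eq_true ha, if_true]
    cases i with
    | zero => omega
    | succ i => exact Nat.succ_lt_succ (ih hl.2 h)

end IsCell

lemma isCell_iff_lt_length {l : List ℕ} (hl : IsPtn l) {i : ℕ} :
    IsCell l (i, 0) ↔ i < l.length := by
  constructor
  · intro h
    by_contra hi
    rw [IsCell, List.getD_eq_default _ _ (not_lt.mp hi)] at h
    exact lt_irrefl 0 h
  · intro hi
    exact (hl.2 _ (List.getElem_mem hi)).trans_eq (List.getD_eq_getElem _ _ hi).symm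

instance (l : List ℕ) : DecidablePred (IsCell l) := fun p =>
  inferInstanceAs (Decidable (p.2 < l.getD p.1 0))

def cellFinset (l : List ℕ) : Finset (ℕ × ℕ) :=
  (Finset.range l.length ×ˢ Finset.range (l.sum + 1)).filter (IsCell l)

lemma mem_cellFinset {l : List ℕ} {p : ℕ × ℕ} : p ∈ cellFinset l ↔ IsCell l p := by
  refine ⟨fun h => (Finset.mem_filter.mp h).2, fun h => Finset.mem_filter.mpr ⟨?_, h⟩⟩
  have hi : p.1 < l.length := by
    by_contra hi
    rw [IsCell, List.getD_eq_default _ _ (not_lt.mp hi)] at h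
    exact Nat.not_lt_zero _ h
  have hc : p.2 < l.getD p.1 0 := h
  rw [List.getD_eq_getElem _ _ hi] at hc
  simp only [Finset.mem_product, Finset.mem_range]
  exact ⟨hi, by have := List.le_sum_of_mem (List.getElem_mem hi); omega⟩

instance (n : ℕ) (l m : List ℕ) (tT tS : ℕ × ℕ → Fin n) :
    Decidable (IsBitableau n l m tT tS) :=
  decidable_of_iff
    ((∀ p ∈ cellFinset l, ∀ q ∈ cellFinset l, tT p = tT q → p = q) ∧
      (∀ p ∈ cellFinset m, ∀ q ∈ cellFinset m, tS p = tS q → p = q) ∧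
      (∀ p ∈ cellFinset l, ∀ q ∈ cellFinset m, tT p ≠ tS q) ∧
      ∀ k : Fin n, (∃ p ∈ cellFinset l, tT p = k) ∨ (∃ p ∈ cellFinset m, tS p = k))
    (by simp only [mem_cellFinset, IsBitableau]; tauto)

instance : DecidablePred IsPtn := fun l =>
  inferInstanceAs (Decidable (l.Pairwise (· ≥ ·) ∧ ∀ x ∈ l, 0 < x))

section Vanishing

variable {K : Type*} [CommRing K] {n : ℕ} {l : List ℕ} {t : ℕ × ℕ → Fin n}

lemma eval_speSsq_eq_zero (hl : l.Pairwise (· ≥ ·)) (x : Fin n → K) {i j c : ℕ} (hij : i < j)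
    (hj : IsCell l (j, c)) (hx : x (t (i, c)) ^ 2 = x (t (j, c)) ^ 2) :
    eval x (speSsq K n l t) = 0 := by
  have hc : c < l.getD 0 0 := hj.mono hl (Nat.zero_le j) le_rfl
  have hi : i < colLen l c := (hj.mono hl hij.le le_rfl).lt_colLen hl
  simp only [speSsq, map_prod]
  refine Finset.prod_eq_zero (Finset.mem_range.mpr hc) <|
    Finset.prod_eq_zero (Finset.mem_range.mpr hi) <|
    Finset.prod_eq_zero (Finset.mem_range.mpr (hj.lt_colLen hl)) ?_
  simp [hij, hx]

lemma eval_prodVars_eq_zero (hl : l.Pairwise (· ≥ ·)) (x : Fin n → K) {i c : ℕ}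
    (h : IsCell l (i, c)) (hx : x (t (i, c)) = 0) : eval x (prodVars K n l t) = 0 := by
  have hc : c < l.getD 0 0 := h.mono hl (Nat.zero_le i) le_rfl
  simp only [prodVars, map_prod]
  exact Finset.prod_eq_zero (Finset.mem_range.mpr hc) <|
    Finset.prod_eq_zero (Finset.mem_range.mpr (h.lt_colLen hl)) (by simp [hx])

variable (k : Fin n)

lemma eval_update_speSsq_eq_zero_of_ne (hl : l.Pairwise (· ≥ ·)) {i j c : ℕ} (hij : i < j)
    (hj : IsCell l (j, c)) (hik : t (i, c) ≠ k) (hjk : t (j, c) ≠ k) :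
    eval (Function.update (1 : Fin n → K) k 0) (speSsq K n l t) = 0 :=
  eval_speSsq_eq_zero hl _ hij hj (by simp [Function.update_of_ne hik, Function.update_of_ne hjk])

lemma eval_update_speSsq_eq_zero (hl : l.Pairwise (· ≥ ·))
    (ht : ∀ p q, IsCell l p → IsCell l q → t p = t q → p = q)
    (h : IsCell l (2, 0) ∨ IsCell l (1, 1)) :
    eval (Function.update (1 : Fin n → K) k 0) (speSsq K n l t) = 0 := by
  have hne : ∀ p q, IsCell l p → IsCell l q → p ≠ q → t p = k → t q ≠ k :=
    fun p q hp hq hpq hp' hq' => hpq (ht p q hp hq (hp'.trans hq'.symm))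
  rcases h with h | h
  · have h0 : IsCell l (0, 0) := h.mono hl (by norm_num) le_rfl
    have h1 : IsCell l (1, 0) := h.mono hl (by norm_num) le_rfl
    by_cases ht0 : t (0, 0) = k
    · exact eval_update_speSsq_eq_zero_of_ne k hl one_lt_two h
        (hne _ _ h0 h1 (by simp) ht0) (hne _ _ h0 h (by simp) ht0)
    by_cases ht1 : t (1, 0) = k
    · exact eval_update_speSsq_eq_zero_of_ne k hl two_pos h ht0 (hne _ _ h1 h (by simp) ht1)
    · exact eval_update_speSsq_eq_zero_of_ne k hl one_pos h1 ht0 ht1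
  · have h00 : IsCell l (0, 0) := h.mono hl (Nat.zero_le 1) (Nat.zero_le 1)
    have h10 : IsCell l (1, 0) := h.mono hl le_rfl (Nat.zero_le 1)
    have h01 : IsCell l (0, 1) := h.mono hl (Nat.zero_le 1) le_rfl
    by_cases hcol : t (0, 0) ≠ k ∧ t (1, 0) ≠ k
    · exact eval_update_speSsq_eq_zero_of_ne k hl one_pos h10 hcol.1 hcol.2
    obtain ⟨p, hp, hpk⟩ : ∃ p, IsCell l p ∧ p.2 = 0 ∧ t p = k := by
      rw [not_and_or, not_not, not_not] at hcol
      rcases hcol with hk | hk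
      exacts [⟨_, h00, rfl, hk⟩, ⟨_, h10, rfl, hk⟩]
    have hp1 : ∀ i, p ≠ (i, 1) := fun i hpi => by simp [hpi] at hpk
    exact eval_update_speSsq_eq_zero_of_ne k hl one_pos h
      (hne _ _ hp h01 (hp1 0) hpk.2) (hne _ _ hp h (hp1 1) hpk.2)

lemma eval_update_speSsq_mul_prodVars_eq_zero (hl : l.Pairwise (· ≥ ·)) (h : IsCell l (1, 0)) :
    eval (Function.update (1 : Fin n → K) k 0) (speSsq K n l t * prodVars K n l t) = 0 := by
  have h0 : IsCell l (0, 0) := h.mono hl (Nat.zero_le 1) le_rfl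
  rw [map_mul]
  by_cases hcol : t (0, 0) ≠ k ∧ t (1, 0) ≠ k
  · rw [eval_update_speSsq_eq_zero_of_ne k hl one_pos h hcol.1 hcol.2, zero_mul]
  · rw [not_and_or, not_not, not_not] at hcol
    rcases hcol with hk | hk
    · rw [eval_prodVars_eq_zero hl _ h0 (by simp [hk]), mul_zero]
    · rw [eval_prodVars_eq_zero hl _ h (by simp [hk]), mul_zero]

lemma eval_update_speB_eq_zero {l m : List ℕ} {tT tS : ℕ × ℕ → Fin n}
    (hl : l.Pairwise (· ≥ ·)) (hm : m.Pairwise (· ≥ ·)) (hbt : IsBitableau n l m tT tS)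
    (h : IsCell m (1, 0) ∨ IsCell l (2, 0) ∨ IsCell l (1, 1)) :
    eval (Function.update (1 : Fin n → K) k 0) (speB K n l m tT tS) = 0 := by
  rw [speB, mul_assoc, map_mul]
  rcases h with h | h
  · rw [eval_update_speSsq_mul_prodVars_eq_zero k hm h, mul_zero]
  · rw [eval_update_speSsq_eq_zero k hl hbt.1 h, zero_mul]

end Vanishing

lemma bidom_refl (l m : List ℕ) : bidom l m l m := fun _ _ => ⟨le_rfl, le_rfl⟩

lemma bidom.head_le {l m w t : List ℕ} (h : bidom l m w t) : l.getD 0 0 ≤ w.getD 0 0 := by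
  simpa using (h 1 le_rfl).2

lemma predD.swap_left {l m t w : List ℕ} (h : predD l m t w) : predD m l t w := ⟨h.2, h.1⟩

lemma predD.swap_right {l m t w : List ℕ} (h : predD l m t w) : predD l m w t :=
  ⟨h.1.symm, h.2.symm⟩

lemma predD.head_le {l m t w : List ℕ} (h : predD l m t w) :
    l.getD 0 0 ≤ max (t.getD 0 0) (w.getD 0 0) ∧ m.getD 0 0 ≤ max (t.getD 0 0) (w.getD 0 0) := by
  constructor
  · rcases h.1 with h | h
    exacts [le_max_of_le_left h.head_le, le_max_of_le_right h.head_le]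
  · rcases h.2 with h | h
    exacts [le_max_of_le_left h.head_le, le_max_of_le_right h.head_le]

lemma didom_pair_pair_iff {l m t w : List ℕ} :
    didom (.pair {l, m}) (.pair {t, w}) ↔ predD l m t w := by
  refine ⟨fun ⟨l', m', t', w', hs, hs', h⟩ => ?_, fun h => ⟨l, m, t, w, rfl, rfl, h⟩⟩
  rcases Multiset.pair_eq_pair_iff.mp hs with ⟨rfl, rfl⟩ | ⟨rfl, rfl⟩ <;>
    rcases Multiset.pair_eq_pair_iff.mp hs' with ⟨rfl, rfl⟩ | ⟨rfl, rfl⟩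
  exacts [h, h.swap_right, h.swap_left, h.swap_left.swap_right]

lemma didom_pair_refl (l m : List ℕ) : didom (.pair {l, m}) (.pair {l, m}) :=
  didom_pair_pair_iff.mpr ⟨.inl (bidom_refl l m), .inr (bidom_refl m l)⟩

lemma Dipart.Valid.of_pair {n : ℕ} {l m : List ℕ} (h : (Dipart.pair {l, m}).Valid n) :
    IsPtn l ∧ IsPtn m ∧ l.sum + m.sum = n := by
  obtain ⟨l', m', hs, -, hl, hm, hsum⟩ := h
  rcases Multiset.pair_eq_pair_iff.mp hs with ⟨rfl, rfl⟩ | ⟨rfl, rfl⟩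
  exacts [⟨hl, hm, hsum⟩, ⟨hm, hl, by omega⟩]

lemma Dipart.Valid.exists_eq_pair {n : ℕ} (hn : Odd n) {Λ : Dipart} (h : Λ.Valid n) :
    ∃ l m, Λ = .pair {l, m} := by
  cases Λ with
  | pair s =>
    obtain ⟨l, m, rfl, -⟩ := h
    exact ⟨l, m, rfl⟩
  | signed l _ =>
    obtain ⟨k, rfl⟩ := hn
    exact absurd h.2 (by omega)

lemma not_didom_pair_21_2_pair_3_11 :
    ¬ didom (.pair {[2, 1], [2]}) (.pair {[3], [1, 1]}) := by
  intro h
  rcases (didom_pair_pair_iff.mp h).1 with h | h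
  · exact absurd (h 2 one_le_two).2 (by decide)
  · exact absurd h.head_le (by decide)

lemma eq_21_2_of_not_isCell {l m : List ℕ} (hl : IsPtn l) (hm : IsPtn m) (hl2 : l.getD 0 0 ≤ 2)
    (hm2 : m.getD 0 0 ≤ 2) (hsum : l.sum + m.sum = 5)
    (h : ¬ (IsCell m (1, 0) ∨ IsCell l (2, 0) ∨ IsCell l (1, 1))) : l = [2, 1] ∧ m = [2] := by
  simp only [not_or, isCell_iff_lt_length hl, isCell_iff_lt_length hm, not_lt] at h
  obtain ⟨hm1, hl2', hl11⟩ := h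
  rcases m with _ | ⟨c, _ | ⟨c', m⟩⟩ <;> rcases l with _ | ⟨a, _ | ⟨b, _ | ⟨b', l⟩⟩⟩ <;>
    simp_all [IsPtn, IsCell] <;> omega

section Variety

variable {K : Type*} [CommRing K]

lemma mem_varD_pair_iff {n : ℕ} {s : Multiset (List ℕ)} {x : Fin n → K} :
    x ∈ varD K n (.pair s) ↔
      ∀ l m tT tS, s = {l, m} → IsBitableau n l m tT tS → eval x (speB K n l m tT tS) = 0 := by
  change IdealD K n (.pair s) ≤ RingHom.ker (eval x) ↔ _
  simp only [IdealD, Ideal.span_le, Set.ofPred_subset, SetLike.mem_coe, RingHom.mem_ker]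
  constructor
  · exact fun h l m tT tS hs hbt => h _ ⟨l, m, tT, tS, hs, hbt, rfl⟩
  · rintro h _ ⟨l, m, tT, tS, hs, hbt, rfl⟩
    exact h l m tT tS hs hbt

variable [Nontrivial K]

lemma update_not_mem_varD_pair_21_2 :
    Function.update (1 : Fin 5 → K) 4 0 ∉ varD K 5 (.pair {[2, 1], [2]}) := by
  rw [mem_varD_pair_iff]
  push Not
  refine ⟨[2, 1], [2], fun p => if p = (0, 0) then 0 else if p = (1, 0) then 4 else 1,
    fun p => if p = (0, 0) then 2 else 3, rfl, by decide, ?_⟩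
  simp [speB, speSsq, prodVars, colLen, Finset.prod_range_succ]

lemma update_not_mem_varD_pair_3_11 :
    Function.update (1 : Fin 5 → K) 4 0 ∉ varD K 5 (.pair {[3], [1, 1]}) := by
  rw [mem_varD_pair_iff]
  push Not
  refine ⟨[1, 1], [3], fun p => if p = (0, 0) then 0 else 4,
    fun p => if p = (0, 0) then 1 else if p = (0, 1) then 2 else 3, Multiset.pair_comm _ _,
    by decide, ?_⟩
  simp [speB, speSsq, prodVars, colLen, Finset.prod_range_succ]

end Variety

lemma Set.PairwiseDisjoint.exists_and_mem_iff {ι α : Type*} {s : Set ι} {f : ι → Set α}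
    (hs : s.PairwiseDisjoint f) {i : ι} (hi : i ∈ s) {a : α} (ha : a ∈ f i) {P : ι → Prop} :
    (∃ j, j ∈ s ∧ P j ∧ a ∈ f j) ↔ P i :=
  ⟨fun ⟨_, hj, hPj, haj⟩ => hs.elim_set hj hi a haj ha ▸ hPj, fun hPi => ⟨i, hi, hPi, ha⟩⟩

theorem stmt18_general (K : Type*) [Field K] :
    ¬ ∃ O : Dipart → Set (Fin 5 → K),
      (∀ Λ₁ Λ₂ : Dipart, Λ₁.Valid 5 → Λ₂.Valid 5 → Λ₁ ≠ Λ₂ → Disjoint (O Λ₁) (O Λ₂)) ∧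
      (∀ x : Fin 5 → K, ∃ Λ : Dipart, Λ.Valid 5 ∧ x ∈ O Λ) ∧
      (∀ Θ : Dipart, Θ.Valid 5 →
        varD K 5 Θ = {x | ∃ Λ : Dipart, Λ.Valid 5 ∧ ¬ didom Λ Θ ∧ x ∈ O Λ}) := by
  rintro ⟨O, hdisj, hcover, hvar⟩
  set x := Function.update (1 : Fin 5 → K) 4 0
  obtain ⟨Λ, hΛ, hxΛ⟩ := hcover x
  have key (Θ : Dipart) (hΘ : Θ.Valid 5) : x ∈ varD K 5 Θ ↔ ¬ didom Λ Θ := by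
    rw [hvar Θ hΘ]
    exact Set.PairwiseDisjoint.exists_and_mem_iff
      (fun _ hi _ hj hij => hdisj _ _ hi hj hij) hΛ hxΛ
  obtain ⟨l₀, m₀, rfl⟩ := hΛ.exists_eq_pair (by decide)
  have hΘ₁ : (Dipart.pair {[2, 1], [2]}).Valid 5 :=
    ⟨_, _, rfl, by decide, by decide, by decide, rfl⟩
  have hΘ₂ : (Dipart.pair {[3], [1, 1]}).Valid 5 :=
    ⟨_, _, rfl, by decide, by decide, by decide, rfl⟩
  have h₁ := not_not.mp ((key _ hΘ₁).not.mp update_not_mem_varD_pair_21_2)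
  have h₂ := not_not.mp ((key _ hΘ₂).not.mp update_not_mem_varD_pair_3_11)
  have hxV : x ∉ varD K 5 (.pair {l₀, m₀}) := fun hx => (key _ hΛ).mp hx (didom_pair_refl l₀ m₀)
  obtain ⟨l, m, tT, tS, hs, hbt, hne⟩ : ∃ l m tT tS, ({l₀, m₀} : Multiset (List ℕ)) = {l, m} ∧
      IsBitableau 5 l m tT tS ∧ eval x (speB K 5 l m tT tS) ≠ 0 := by
    simpa [mem_varD_pair_iff] using hxV
  rw [hs] at hΛ h₁ h₂
  obtain ⟨hl, hm, hsum⟩ := hΛ.of_pair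
  obtain ⟨hl₂, hm₂⟩ := (didom_pair_pair_iff.mp h₁).head_le
  obtain ⟨rfl, rfl⟩ :=
    eq_21_2_of_not_isCell hl hm hl₂ hm₂ hsum (mt (eval_update_speB_eq_zero 4 hl.1 hm.1 hbt) hne)
  exact not_didom_pair_21_2_pair_3_11 h₂

/-- For `n = 5` there is no set partition `(O(Λ))_{Λ ∈ 𝒟₅}` of `K⁵` such that every `D`-Specht
variety is the union of the `O(Λ)` over the dipartitions `Λ` not didominated by `Θ`. -/
theorem stmt18 (K : Type*) [Field K] [CharZero K] :
    ¬ ∃ O : Dipart → Set (Fin 5 → K),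
      (∀ Λ₁ Λ₂ : Dipart, Λ₁.Valid 5 → Λ₂.Valid 5 → Λ₁ ≠ Λ₂ → Disjoint (O Λ₁) (O Λ₂)) ∧
      (∀ x : Fin 5 → K, ∃ Λ : Dipart, Λ.Valid 5 ∧ x ∈ O Λ) ∧
      (∀ Θ : Dipart, Θ.Valid 5 →
        varD K 5 Θ = {x | ∃ Λ : Dipart, Λ.Valid 5 ∧ ¬ didom Λ Θ ∧ x ∈ O Λ}) :=
  stmt18_general K
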